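/- arXiv:1911.08761 — 3 statements merged into one kernel-verified Lean document; each statement's English description precedes it below -/
import Mathlib

section
/- The two orthonormal bases of C^2 ⊗ C^3 given by |φ_{m,n}⟩ = (1/√2) Σ_{p=0}^{1} (-1)^{np} |p⟩|p+m mod 3⟩ and |ψ_{m,n}⟩ = (1/√2) Σ_{p=0}^{1} (-1)^{np} |a_p⟩|p+m mod 3⟩, where |a_0⟩ = (1/√3)(|0⟩ - √2 i |1⟩) and |a_1⟩ = (1/√3)(√2|0⟩ + i |1⟩), are mutually unbiased: for all m,n,m',n', |⟨φ_{m,n}|ψ_{m',n'}⟩| = 1/√6. -/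
open Matrix Complex

noncomputable section

/-- Trace inner product on coefficient matrices, equal to the inner product of the
corresponding states in `ℂ^m ⊗ ℂ^n`. -/
def matInner {m n : Type*} [Fintype m] [Fintype n] (A B : Matrix m n ℂ) : ℂ :=
  (Aᴴ * B).trace

/-- Coefficient matrix of `|φ_{m,n}⟩ = (1/√2) ∑_p (-1)^{np} |p⟩|(p+m) mod 3⟩`. -/
def phiMat (m : Fin 3) (n : Fin 2) : Matrix (Fin 2) (Fin 3) ℂ := fun p j =>
  (Real.sqrt 2 : ℂ)⁻¹ * (-1 : ℂ) ^ ((n : ℕ) * (p : ℕ)) *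
    (if (j : ℕ) = ((p : ℕ) + (m : ℕ)) % 3 then 1 else 0)

/-- `|a_0⟩ = (1/√3)(|0⟩ - √2 i |1⟩)`, `|a_1⟩ = (1/√3)(√2|0⟩ + i|1⟩)`;
`aVec p q` is the coefficient of `|q⟩` in `|a_p⟩`. -/
def aVec : Fin 2 → Fin 2 → ℂ :=
  ![![(Real.sqrt 3 : ℂ)⁻¹, -(Real.sqrt 2 : ℂ) * Complex.I * (Real.sqrt 3 : ℂ)⁻¹],
    ![(Real.sqrt 2 : ℂ) * (Real.sqrt 3 : ℂ)⁻¹, Complex.I * (Real.sqrt 3 : ℂ)⁻¹]]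

/-- Coefficient matrix of `|ψ_{m,n}⟩ = (1/√2) ∑_p (-1)^{np} |a_p⟩|(p+m) mod 3⟩`. -/
def psiMat (m : Fin 3) (n : Fin 2) : Matrix (Fin 2) (Fin 3) ℂ := fun q j =>
  (Real.sqrt 2 : ℂ)⁻¹ * ∑ p : Fin 2, (-1 : ℂ) ^ ((n : ℕ) * (p : ℕ)) * aVec p q *
    (if (j : ℕ) = ((p : ℕ) + (m : ℕ)) % 3 then 1 else 0)


/-! The factor `ℂ^3` forces `(p + m) % 3 = (p' + m') % 3` in the double sum over `p, p'`
defining `⟨φ_{m,n}|ψ_{m',n'}⟩`. For `m' = m + 1` or `m + 2` a single term survives, an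
off-diagonal entry `±√2 i/√3` or `±√2/√3` of the matrix `(⟨p|a_{p'}⟩)`; for `m' = m` the two
diagonal entries `1/√3` and `±i/√3` survive, and `|1 ± i|/√3 = √2/√3` as well. With the
normalisation `1/2` every overlap has modulus `1/√6`. -/

lemma matInner_eq_sum {m n : Type*} [Fintype m] [Fintype n] (A B : Matrix m n ℂ) :
    matInner A B = ∑ i, ∑ j, star (A i j) * B i j := by
  simp only [matInner, trace, mul_apply, conjTranspose_apply, diag]
  exact Finset.sum_comm

lemma sqrt_two_inv_mul_self : (Real.sqrt 2 : ℂ)⁻¹ * (Real.sqrt 2 : ℂ)⁻¹ = 2⁻¹ := by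
  rw [← mul_inv, ← ofReal_mul, Real.mul_self_sqrt zero_le_two, ofReal_ofNat]

lemma matInner_phiMat_psiMat_self (m : Fin 3) (n n' : Fin 2) :
    matInner (phiMat m n) (psiMat m n') =
      2⁻¹ * (aVec 0 0 + (-1) ^ ((n : ℕ) + n') * aVec 1 1) := by
  rw [matInner_eq_sum, pow_add, ← sqrt_two_inv_mul_self]
  fin_cases m <;> simp [phiMat, psiMat, Fin.sum_univ_two, Fin.sum_univ_three] <;> ring

lemma matInner_phiMat_psiMat_add_one (m : Fin 3) (n n' : Fin 2) :
    matInner (phiMat m n) (psiMat (m + 1) n') = 2⁻¹ * ((-1) ^ (n : ℕ) * aVec 0 1) := by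
  rw [matInner_eq_sum, ← sqrt_two_inv_mul_self]
  fin_cases m <;> simp [phiMat, psiMat, Fin.sum_univ_two, Fin.sum_univ_three] <;> ring

lemma matInner_phiMat_psiMat_add_two (m : Fin 3) (n n' : Fin 2) :
    matInner (phiMat m n) (psiMat (m + 2) n') = 2⁻¹ * ((-1) ^ (n' : ℕ) * aVec 1 0) := by
  rw [matInner_eq_sum, ← sqrt_two_inv_mul_self]
  fin_cases m <;> simp [phiMat, psiMat, Fin.sum_univ_two, Fin.sum_univ_three] <;> ring

lemma norm_neg_one_pow_mul_aVec_zero_one (k : ℕ) :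
    ‖(-1) ^ k * aVec 0 1‖ = Real.sqrt 2 / Real.sqrt 3 := by
  simp [aVec, div_eq_mul_inv, abs_of_nonneg (Real.sqrt_nonneg _)]

lemma norm_neg_one_pow_mul_aVec_one_zero (k : ℕ) :
    ‖(-1) ^ k * aVec 1 0‖ = Real.sqrt 2 / Real.sqrt 3 := by
  simp [aVec, div_eq_mul_inv, abs_of_nonneg (Real.sqrt_nonneg _)]

lemma norm_aVec_zero_zero_add_neg_one_pow_mul (k : ℕ) :
    ‖aVec 0 0 + (-1) ^ k * aVec 1 1‖ = Real.sqrt 2 / Real.sqrt 3 := by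
  have hsum : aVec 0 0 + (-1) ^ k * aVec 1 1 =
      ((1 : ℝ) + ((-1) ^ k : ℝ) * I) * (Real.sqrt 3 : ℂ)⁻¹ := by
    simp only [aVec, cons_val', cons_val_zero, cons_val_one, cons_val_fin_one, ofReal_one,
      ofReal_pow, ofReal_neg]
    ring
  rw [hsum, norm_mul, norm_add_mul_I, norm_inv, norm_real]
  norm_num [div_eq_mul_inv, ← pow_mul, abs_of_nonneg (Real.sqrt_nonneg _)]

lemma norm_inv_two_mul_of_norm_eq {z : ℂ} (hz : ‖z‖ = Real.sqrt 2 / Real.sqrt 3) :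
    ‖2⁻¹ * z‖ = 1 / Real.sqrt 6 := by
  have h6 : Real.sqrt 6 = Real.sqrt 2 * Real.sqrt 3 := by
    rw [← Real.sqrt_mul zero_le_two]; norm_num
  have h2 : Real.sqrt 2 * Real.sqrt 2 = 2 := Real.mul_self_sqrt zero_le_two
  rw [norm_mul, hz, h6]
  field_simp
  norm_num [h2]

/-- The two bases `{|φ_{m,n}⟩}` and `{|ψ_{m,n}⟩}` of `ℂ^2 ⊗ ℂ^3` are mutually unbiased:
all cross inner products have modulus `1/√6`. -/
theorem phi_psi_mutually_unbiased :
    ∀ (m m' : Fin 3) (n n' : Fin 2),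
      ‖matInner (phiMat m n) (psiMat m' n')‖ = 1 / Real.sqrt 6 := by
  intro m m' n n'
  obtain rfl | rfl | rfl : m' = m ∨ m' = m + 1 ∨ m' = m + 2 := by revert m m'; decide
  · rw [matInner_phiMat_psiMat_self]
    exact norm_inv_two_mul_of_norm_eq (norm_aVec_zero_zero_add_neg_one_pow_mul _)
  · rw [matInner_phiMat_psiMat_add_one]
    exact norm_inv_two_mul_of_norm_eq (norm_neg_one_pow_mul_aVec_zero_one _)
  · rw [matInner_phiMat_psiMat_add_two]
    exact norm_inv_two_mul_of_norm_eq (norm_neg_one_pow_mul_aVec_one_zero _)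
end
end

section
/- Let {A_i}_{i=1}^{dd'} ⊂ M_{d×d'}(C) and {C_j}_{j=1}^{pq} ⊂ M_{p×q}(C) be SEBk_1 and SEBk_2 respectively (orthonormal bases under the trace inner product consisting of matrices whose nonzero singular values are k_1 copies of 1/√k_1, resp. k_2 copies of 1/√k_2). Then the set {A_i ⊗ C_j} of Kronecker products is an SEB(k_1k_2) in M_{pd×qd'}(C): an orthonormal basis whose members have nonzero singular values equal to k_1k_2 copies of 1/√(k_1k_2). -/
open Matrix Complex Kronecker

noncomputable section

/-- `A` has exactly `k` nonzero singular values, all equal to `1/√k`: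
equivalently `rank A = k` and `k·AᴴA` is idempotent (a rank-`k` orthogonal
projection scaled by `1/k`). -/
def IsSEk {m n : Type*} [Fintype m] [Fintype n] (k : ℕ) (A : Matrix m n ℂ) : Prop :=
  A.rank = k ∧ ((k : ℂ) • (Aᴴ * A)) * ((k : ℂ) • (Aᴴ * A)) = (k : ℂ) • (Aᴴ * A)


lemma conjTranspose_kronecker {l m n o : Type*} (A : Matrix l m ℂ) (B : Matrix n o ℂ) :
    (A ⊗ₖ B)ᴴ = Aᴴ ⊗ₖ Bᴴ := by
  ext ⟨i, j⟩ ⟨k, l⟩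
  simp [conjTranspose_apply, kroneckerMap_apply, mul_comm]

lemma rank_smul_eq {m n : Type*} [Fintype m] [Fintype n] (c : ℂ) (hc : c ≠ 0)
    (N : Matrix m n ℂ) : (c • N).rank = N.rank := by
  unfold Matrix.rank
  have h : (c • N).mulVecLin = c • N.mulVecLin := by
    ext v i
    simp [Matrix.smul_mulVec]
  rw [h, LinearMap.range_smul _ c hc]

lemma rank_idem_eq_trace {n : Type*} [Fintype n] [DecidableEq n] (P : Matrix n n ℂ)
    (hP : P * P = P) : (P.rank : ℂ) = P.trace := by
  set f := Matrix.toLin' P with hf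
  have hff : f ∘ₗ f = f := by rw [hf, ← Matrix.toLin'_mul, hP]
  have hproj : LinearMap.IsProj (LinearMap.range f) f := by
    refine ⟨fun x => LinearMap.mem_range_self f x, ?_⟩
    rintro x ⟨y, rfl⟩
    exact congrFun (congrArg DFunLike.coe hff) y
  have htr : LinearMap.trace ℂ (n → ℂ) f = (Module.finrank ℂ (LinearMap.range f) : ℂ) :=
    hproj.trace
  have h2 : LinearMap.trace ℂ (n → ℂ) f = P.trace := by
    rw [LinearMap.trace_eq_matrix_trace ℂ (Pi.basisFun ℂ n) f,
      LinearMap.toMatrix_eq_toMatrix', hf, LinearMap.toMatrix'_toLin']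
  have hr : P.rank = Module.finrank ℂ (LinearMap.range f) := by
    rw [Matrix.rank]; congr 1
  rw [hr, ← htr, h2]

lemma eq_zero_of_rank_zero {m n : Type*} [Fintype m] [Fintype n] [DecidableEq n]
    {A : Matrix m n ℂ} (h : A.rank = 0) : A = 0 := by
  have h0 : LinearMap.range A.mulVecLin = ⊥ := by
    have h' : Module.finrank ℂ (LinearMap.range A.mulVecLin) = 0 := h
    exact Submodule.finrank_eq_zero.mp h'
  have hv : ∀ v, A.mulVec v = 0 := fun v => by
    have : A.mulVecLin v ∈ (⊥ : Submodule ℂ (m → ℂ)) := h0 ▸ LinearMap.mem_range_self _ v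
    simpa using this
  ext i j
  have := congrFun (hv (Pi.single j 1)) i
  simpa [Matrix.mulVec_single] using this

/-- If `{A_i}` is an SEBk₁ of `M_{d×d'}(ℂ)` and `{C_j}` an SEBk₂ of `M_{p×q}(ℂ)`
(orthonormal bases of special matrices), then the Kronecker products `{A_i ⊗ C_j}`
form an SEB(k₁k₂) of `M_{pd×qd'}(ℂ)`: an orthonormal basis (of the correct
cardinality `dd'·pq`) whose members have nonzero singular values equal to `k₁k₂`
copies of `1/√(k₁k₂)`. -/
theorem kronecker_SEBk (d d' p q k₁ k₂ : ℕ)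
    (A : Fin (d * d') → Matrix (Fin d) (Fin d') ℂ)
    (C : Fin (p * q) → Matrix (Fin p) (Fin q) ℂ)
    (hA₁ : ∀ i, IsSEk k₁ (A i))
    (hA₂ : ∀ i j, matInner (A i) (A j) = if i = j then 1 else 0)
    (hC₁ : ∀ i, IsSEk k₂ (C i))
    (hC₂ : ∀ i j, matInner (C i) (C j) = if i = j then 1 else 0) :
    (∀ i j, IsSEk (k₁ * k₂) (A i ⊗ₖ C j)) ∧
    (∀ i j i' j', matInner (A i ⊗ₖ C j) (A i' ⊗ₖ C j') =
      if i = i' ∧ j = j' then 1 else 0) := by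
  -- inner-product multiplicativity
  have key : ∀ i i' j j', matInner (A i ⊗ₖ C j) (A i' ⊗ₖ C j') =
      matInner (A i) (A i') * matInner (C j) (C j') := by
    intro i i' j j'
    unfold matInner
    rw [conjTranspose_kronecker, ← Matrix.mul_kronecker_mul, Matrix.trace_kronecker]
  -- nonzero indices (needed for nonempty Fin types: only if they exist)
  constructor
  · intro i j
    obtain ⟨hAr, hAi⟩ := hA₁ i
    obtain ⟨hCr, hCi⟩ := hC₁ j
    -- k₁, k₂ ≠ 0
    have hk₁ : (k₁ : ℂ) ≠ 0 := by
      intro h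
      have hk0 : k₁ = 0 := by exact_mod_cast h
      have : A i = 0 := eq_zero_of_rank_zero (by rw [hAr, hk0])
      have h1 : matInner (A i) (A i) = 1 := by simpa using hA₂ i i
      rw [this] at h1
      simp [matInner] at h1
    have hk₂ : (k₂ : ℂ) ≠ 0 := by
      intro h
      have hk0 : k₂ = 0 := by exact_mod_cast h
      have : C j = 0 := eq_zero_of_rank_zero (by rw [hCr, hk0])
      have h1 : matInner (C j) (C j) = 1 := by simpa using hC₂ j j
      rw [this] at h1
      simp [matInner] at h1
    set M := A i ⊗ₖ C j with hM
    have hMH : Mᴴ * M = ((A i)ᴴ * A i) ⊗ₖ ((C j)ᴴ * C j) := by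
      rw [hM, conjTranspose_kronecker, ← Matrix.mul_kronecker_mul]
    have hsmul : ((k₁ * k₂ : ℕ) : ℂ) • (Mᴴ * M) =
        ((k₁ : ℂ) • ((A i)ᴴ * A i)) ⊗ₖ ((k₂ : ℂ) • ((C j)ᴴ * C j)) := by
      rw [hMH, Matrix.smul_kronecker, Matrix.kronecker_smul, smul_smul]
      push_cast
      ring_nf
    have hidem : (((k₁ * k₂ : ℕ) : ℂ) • (Mᴴ * M)) * (((k₁ * k₂ : ℕ) : ℂ) • (Mᴴ * M)) =
        ((k₁ * k₂ : ℕ) : ℂ) • (Mᴴ * M) := by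
      rw [hsmul, ← Matrix.mul_kronecker_mul, hAi, hCi]
    refine ⟨?_, hidem⟩
    -- rank computation
    have hc : ((k₁ * k₂ : ℕ) : ℂ) ≠ 0 := by
      push_cast
      exact mul_ne_zero hk₁ hk₂
    have e1 : matInner (A i) (A i) = 1 := by simpa using hA₂ i i
    have e2 : matInner (C j) (C j) = 1 := by simpa using hC₂ j j
    unfold matInner at e1 e2
    have htraceN : (Mᴴ * M).trace = 1 := by
      rw [hMH, Matrix.trace_kronecker, e1, e2, mul_one]
    have htraceP : (((k₁ * k₂ : ℕ) : ℂ) • (Mᴴ * M)).trace = ((k₁ * k₂ : ℕ) : ℂ) := by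
      rw [Matrix.trace_smul, htraceN, smul_eq_mul, mul_one]
    have hrankP : ((((k₁ * k₂ : ℕ) : ℂ) • (Mᴴ * M)).rank : ℂ) = ((k₁ * k₂ : ℕ) : ℂ) :=
      (rank_idem_eq_trace _ hidem).trans htraceP
    have hrankP' : (((k₁ * k₂ : ℕ) : ℂ) • (Mᴴ * M)).rank = k₁ * k₂ := by
      exact_mod_cast hrankP
    open scoped ComplexOrder in
    rw [← Matrix.rank_conjTranspose_mul_self M, ← rank_smul_eq _ hc (Mᴴ * M), hrankP']
  · intro i j i' j'
    rw [key, hA₂, hC₂]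
    by_cases h1 : i = i' <;> by_cases h2 : j = j' <;> simp [h1, h2]
end
end

section
/- For positive integers d, d', p, q, k_1 ≤ min(d,d'), k_2 ≤ min(p,q): M_{k_1k_2}(pd, qd') ≥ min{M_{k_1}(d,d'), M_{k_2}(p,q)}, where M_k(m,n) denotes the maximum number of pairwise mutually unbiased SEBks in C^m ⊗ C^n. -/
open Matrix Complex

noncomputable section

/-- An SEBk of `ℂ^m ⊗ ℂ^n`: an orthonormal basis of `m·n` special entangled states
with Schmidt number `k`, written via coefficient matrices. -/
def IsSEBk {m n : ℕ} (k : ℕ) (B : Fin (m * n) → Matrix (Fin m) (Fin n) ℂ) : Prop :=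
  (∀ i, IsSEk k (B i)) ∧ ∀ i j, matInner (B i) (B j) = if i = j then 1 else 0

/-- Two bases of `ℂ^m ⊗ ℂ^n` are mutually unbiased. -/
def MUPair {m n : ℕ} (B₁ B₂ : Fin (m * n) → Matrix (Fin m) (Fin n) ℂ) : Prop :=
  ∀ i j, ‖matInner (B₁ i) (B₂ j)‖ = 1 / Real.sqrt (m * n)

/-- There exist `t` pairwise mutually unbiased SEBks in `ℂ^m ⊗ ℂ^n`. -/
def HasMUSEBk (k m n t : ℕ) : Prop :=
  ∃ B : Fin t → Fin (m * n) → Matrix (Fin m) (Fin n) ℂ,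
    (∀ a, IsSEBk k (B a)) ∧ ∀ a b, a ≠ b → MUPair (B a) (B b)

/-- `M_k(m,n)`: the maximum number of pairwise mutually unbiased SEBks in
`ℂ^m ⊗ ℂ^n` (as an extended natural number). -/
def Mnum (k m n : ℕ) : ℕ∞ :=
  sSup {c : ℕ∞ | ∃ t : ℕ, c = t ∧ HasMUSEBk k m n t}

/-- There exist `t` pairwise mutually unbiased orthonormal bases of `ℂ^q`. -/
def HasMUB (q t : ℕ) : Prop :=
  ∃ B : Fin t → Fin q → EuclideanSpace ℂ (Fin q),
    (∀ a, Orthonormal ℂ (B a)) ∧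
    ∀ a b, a ≠ b → ∀ i j, ‖(inner ℂ (B a i) (B b j) : ℂ)‖ = 1 / Real.sqrt q

/-- `N(q)`: the maximum number of mutually unbiased bases of `ℂ^q`. -/
def Nnum (q : ℕ) : ℕ∞ :=
  sSup {c : ℕ∞ | ∃ t : ℕ, c = t ∧ HasMUB q t}

/-!
Tensoring the `a`-th basis of a family of pairwise mutually unbiased SEBk's of `ℂ^d ⊗ ℂ^d'` with
the `a`-th basis of such a family in `ℂ^p ⊗ ℂ^q` gives a family of the same size in
`ℂ^{pd} ⊗ ℂ^{qd'}`. On coefficient matrices this is the Kronecker product, under which trace inner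
products multiply: orthonormality survives, and unbiasedness too since
`1/√(pq) · 1/√(dd') = 1/√(pd·qd')`. The Schmidt condition says that `k • AᴴA` is an idempotent of
rank, hence trace, `k`; Kronecker products of such idempotents are idempotents of trace `k₁k₂`.
-/

open Kronecker

namespace Matrix

variable {K m n : Type*} [Field K]

theorem rank_eq_trace_of_isIdempotentElem [Fintype m] [DecidableEq m] {P : Matrix m m K}
    (hP : IsIdempotentElem P) : (P.rank : K) = P.trace := by
  rw [← trace_toLin'_eq,
    (LinearMap.IsIdempotentElem.isProj_range (toLin' P) (hP.map toLinAlgEquiv')).trace]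
  rfl

theorem eq_zero_of_rank_eq_zero [Fintype n] [DecidableEq n] {A : Matrix m n K}
    (hA : A.rank = 0) : A = 0 := by
  rw [rank, Submodule.finrank_eq_zero, LinearMap.range_eq_bot, ← toLin'_apply'] at hA
  exact toLin'.injective (by rw [hA, map_zero])

end Matrix

section SpecialEntangled

open scoped ComplexOrder

variable {m n l o : Type*} [Fintype m] [Fintype n] [Fintype l] [Fintype o]

theorem matInner_kronecker (A B : Matrix m n ℂ) (C D : Matrix l o ℂ) :
    matInner (A ⊗ₖ C) (B ⊗ₖ D) = matInner A B * matInner C D := by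
  rw [matInner, conjTranspose_kronecker, ← mul_kronecker_mul, trace_kronecker, matInner, matInner]

theorem matInner_reindex (e₁ : m ≃ l) (e₂ : n ≃ o) (A B : Matrix m n ℂ) :
    matInner (reindex e₁ e₂ A) (reindex e₁ e₂ B) = matInner A B := by
  simp only [matInner, reindex_apply, conjTranspose_submatrix, submatrix_mul_equiv, trace,
    diag_apply, submatrix_apply]
  exact e₂.symm.sum_comp fun j => (Aᴴ * B) j j

theorem IsSEk.reindex {k : ℕ} {A : Matrix m n ℂ} (e₁ : m ≃ l) (e₂ : n ≃ o) (hA : IsSEk k A) :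
    IsSEk k (reindex e₁ e₂ A) := by
  refine ⟨(rank_reindex e₁ e₂ A).trans hA.1, ?_⟩
  simpa [reindex_apply, conjTranspose_submatrix, submatrix_mul_equiv, submatrix_smul]
    using congrArg (submatrix · e₂.symm e₂.symm) hA.2

theorem IsSEk.eq_zero {A : Matrix m n ℂ} [DecidableEq n] (hA : IsSEk 0 A) : A = 0 :=
  eq_zero_of_rank_eq_zero hA.1

theorem IsSEk.trace_eq [DecidableEq n] {k : ℕ} {A : Matrix m n ℂ} (hk : k ≠ 0) (hA : IsSEk k A) :
    ((k : ℂ) • (Aᴴ * A)).trace = k := by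
  rw [← rank_eq_trace_of_isIdempotentElem hA.2,
    rank_smul_of_mem_nonZeroDivisors _ (mem_nonZeroDivisors_of_ne_zero (by exact_mod_cast hk)),
    rank_conjTranspose_mul_self, hA.1]

theorem IsSEk.kronecker [DecidableEq n] [DecidableEq o] {k₁ k₂ : ℕ} {A : Matrix m n ℂ}
    {B : Matrix l o ℂ} (hA : IsSEk k₁ A) (hB : IsSEk k₂ B) : IsSEk (k₁ * k₂) (A ⊗ₖ B) := by
  set P₁ := (k₁ : ℂ) • (Aᴴ * A)
  set P₂ := (k₂ : ℂ) • (Bᴴ * B)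
  have hP : ((k₁ * k₂ : ℕ) : ℂ) • ((A ⊗ₖ B)ᴴ * (A ⊗ₖ B)) = P₁ ⊗ₖ P₂ := by
    rw [conjTranspose_kronecker, ← mul_kronecker_mul, smul_kronecker, kronecker_smul, smul_smul,
      Nat.cast_mul]
  have hPP : IsIdempotentElem (P₁ ⊗ₖ P₂) := by
    rw [IsIdempotentElem, ← mul_kronecker_mul, hA.2, hB.2]
  refine ⟨?_, by rw [hP, hPP.eq]⟩
  -- The scalar `k₁ * k₂` can be cancelled only when it is nonzero; otherwise a factor vanishes.
  rcases eq_or_ne k₁ 0 with rfl | hk₁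
  · simp [hA.eq_zero]
  rcases eq_or_ne k₂ 0 with rfl | hk₂
  · simp [hB.eq_zero]
  have hk : ((k₁ * k₂ : ℕ) : ℂ) ∈ nonZeroDivisors ℂ :=
    mem_nonZeroDivisors_of_ne_zero (by positivity)
  -- `rank (A ⊗ₖ B) = rank (P₁ ⊗ₖ P₂) = tr P₁ * tr P₂`, as idempotents have rank equal to trace.
  apply Nat.cast_injective (R := ℂ)
  rw [← rank_conjTranspose_mul_self, ← rank_smul_of_mem_nonZeroDivisors _ hk, hP,
    rank_eq_trace_of_isIdempotentElem hPP, trace_kronecker, hA.trace_eq hk₁, hB.trace_eq hk₂,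
    Nat.cast_mul]

end SpecialEntangled

section KroneckerBasis

variable {p q d d' : ℕ}

def kroneckerIndexEquiv (p q d d' : ℕ) : Fin (p * d * (q * d')) ≃ Fin (p * q) × Fin (d * d') :=
  (finCongr (by ring)).trans finProdFinEquiv.symm

/-- The coefficient matrix of the product state `G i ⊗ F j` of `(ℂ^p ⊗ ℂ^d) ⊗ (ℂ^q ⊗ ℂ^d')`,
where `(i, j)` is the index pair encoded by `s`. -/
def kroneckerBasis (G : Fin (p * q) → Matrix (Fin p) (Fin q) ℂ)
    (F : Fin (d * d') → Matrix (Fin d) (Fin d') ℂ) (s : Fin (p * d * (q * d'))) :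
    Matrix (Fin (p * d)) (Fin (q * d')) ℂ :=
  reindex finProdFinEquiv finProdFinEquiv
    (G (kroneckerIndexEquiv p q d d' s).1 ⊗ₖ F (kroneckerIndexEquiv p q d d' s).2)

theorem matInner_kroneckerBasis (G G' : Fin (p * q) → Matrix (Fin p) (Fin q) ℂ)
    (F F' : Fin (d * d') → Matrix (Fin d) (Fin d') ℂ) (s s' : Fin (p * d * (q * d'))) :
    matInner (kroneckerBasis G F s) (kroneckerBasis G' F' s') =
      matInner (G (kroneckerIndexEquiv p q d d' s).1) (G' (kroneckerIndexEquiv p q d d' s').1) *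
        matInner (F (kroneckerIndexEquiv p q d d' s).2) (F' (kroneckerIndexEquiv p q d d' s').2) := by
  rw [kroneckerBasis, kroneckerBasis, matInner_reindex, matInner_kronecker]

theorem IsSEBk.kroneckerBasis {k₁ k₂ : ℕ} {G : Fin (p * q) → Matrix (Fin p) (Fin q) ℂ}
    {F : Fin (d * d') → Matrix (Fin d) (Fin d') ℂ} (hF : IsSEBk k₁ F) (hG : IsSEBk k₂ G) :
    IsSEBk (k₁ * k₂) (kroneckerBasis G F) := by
  refine ⟨fun s => mul_comm k₂ k₁ ▸ ((hG.1 _).kronecker (hF.1 _)).reindex _ _, fun s s' => ?_⟩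
  simp only [matInner_kroneckerBasis, hG.2, hF.2, ite_zero_mul_ite_zero, mul_one, ← Prod.ext_iff,
    (kroneckerIndexEquiv p q d d').injective.eq_iff]

theorem MUPair.kroneckerBasis {G G' : Fin (p * q) → Matrix (Fin p) (Fin q) ℂ}
    {F F' : Fin (d * d') → Matrix (Fin d) (Fin d') ℂ} (hG : MUPair G G') (hF : MUPair F F') :
    MUPair (kroneckerBasis G F) (kroneckerBasis G' F') := by
  intro s s'
  rw [matInner_kroneckerBasis, norm_mul, hG, hF, div_mul_div_comm, one_mul,
    ← Real.sqrt_mul (by positivity)]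
  push_cast
  ring_nf

end KroneckerBasis

theorem HasMUSEBk.kronecker {k₁ k₂ d d' p q t : ℕ} (h₁ : HasMUSEBk k₁ d d' t)
    (h₂ : HasMUSEBk k₂ p q t) : HasMUSEBk (k₁ * k₂) (p * d) (q * d') t := by
  obtain ⟨F, hF, hFF⟩ := h₁
  obtain ⟨G, hG, hGG⟩ := h₂
  exact ⟨fun a => kroneckerBasis (G a) (F a), fun a => (hF a).kroneckerBasis (hG a),
    fun a b hab => (hGG a b hab).kroneckerBasis (hFF a b hab)⟩

theorem HasMUSEBk.mono {k m n s t : ℕ} (h : HasMUSEBk k m n t) (hst : s ≤ t) :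
    HasMUSEBk k m n s := by
  obtain ⟨B, hB, hBB⟩ := h
  exact ⟨B ∘ Fin.castLE hst, fun a => hB _,
    fun a b hab => hBB _ _ ((Fin.castLE_injective hst).ne hab)⟩

theorem Mnum_kronecker_bound_general (d d' p q k₁ k₂ : ℕ) :
    min (Mnum k₁ d d') (Mnum k₂ p q) ≤ Mnum (k₁ * k₂) (p * d) (q * d') := by
  rw [Mnum, Mnum, sSup_inf_sSup]
  refine iSup₂_le ?_
  rintro ⟨_, _⟩ ⟨⟨t₁, rfl, h₁⟩, ⟨t₂, rfl, h₂⟩⟩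
  exact le_sSup ⟨min t₁ t₂, Nat.mono_cast.map_min.symm,
    (h₁.mono (min_le_left t₁ t₂)).kronecker (h₂.mono (min_le_right t₁ t₂))⟩

/-- Tensor-product bound: for positive integers with `k₁ ≤ min(d,d')`,
`k₂ ≤ min(p,q)`, `M_{k₁k₂}(pd, qd') ≥ min{M_{k₁}(d,d'), M_{k₂}(p,q)}`. -/
theorem Mnum_kronecker_bound (d d' p q k₁ k₂ : ℕ)
    (hd : 0 < d) (hd' : 0 < d') (hp : 0 < p) (hq : 0 < q)
    (hk₁ : k₁ ≤ min d d') (hk₂ : k₂ ≤ min p q) :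
    min (Mnum k₁ d d') (Mnum k₂ p q) ≤ Mnum (k₁ * k₂) (p * d) (q * d') :=
  Mnum_kronecker_bound_general d d' p q k₁ k₂
end
end
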